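/- Let β₁ = (1,0), β₂ = (−1/2, √3/2), β₃ = (−1/2, −√3/2) ∈ ℝ², and for p ∈ ℤ define T_p : ℝ² → ℂ by T_p(x) = Σ_{k=1}^{3} exp(i p (βₖ·x)). Then for all integers p and q, Δ(T_p T_{−q} − T_{p−q}) = −(p² + q² + pq)(T_p T_{−q} − T_{p−q}), where Δ is the Euclidean Laplacian on ℝ² applied to real and imaginary parts. -/

import Mathlib

/-!
Each `T_p` is a sum of plane waves `e^{i ξ·x}`, and a plane wave is an eigenfunction of `Δ` with
eigenvalue `-|ξ|²`. Expanding the product, `T_p T_{-q} = ∑_{k,l} e^{i (p βₖ - q βₗ)·x}`, whose diagonal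
terms `k = l` sum to `T_{p-q}`. What remains are the off-diagonal frequencies, all of the same
squared length `|p βₖ - q βₗ|² = p² + q² - 2pq βₖ·βₗ = p² + q² + pq`.
-/

noncomputable section

/-- Partial derivative in the first coordinate of a function `ℝ × ℝ → ℂ`. -/
def pd1 (f : ℝ × ℝ → ℂ) (x : ℝ × ℝ) : ℂ := deriv (fun t => f (t, x.2)) x.1

/-- Partial derivative in the second coordinate of a function `ℝ × ℝ → ℂ`. -/
def pd2 (f : ℝ × ℝ → ℂ) (x : ℝ × ℝ) : ℂ := deriv (fun t => f (x.1, t)) x.2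

/-- Euclidean Laplacian of a function `ℝ × ℝ → ℂ` (acting on real and imaginary parts). -/
def lap (f : ℝ × ℝ → ℂ) (x : ℝ × ℝ) : ℂ := pd1 (pd1 f) x + pd2 (pd2 f) x

/-- The three cube roots of unity viewed as unit vectors of `ℝ²`. -/
def βvec : Fin 3 → ℝ × ℝ :=
  ![(1, 0), (-(1/2), Real.sqrt 3 / 2), (-(1/2), -(Real.sqrt 3) / 2)]

open Complex Finset

def planeWave (ξ x : ℝ × ℝ) : ℂ :=
  exp (I * ((ξ.1 * x.1 + ξ.2 * x.2 : ℝ) : ℂ))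

theorem planeWave_add (ξ η x : ℝ × ℝ) :
    planeWave (ξ + η) x = planeWave ξ x * planeWave η x := by
  rw [planeWave, planeWave, planeWave, ← exp_add]
  congr 1
  push_cast [Prod.fst_add, Prod.snd_add]
  ring

theorem hasDerivAt_planeWave_fst (ξ : ℝ × ℝ) (c t : ℝ) :
    HasDerivAt (fun s => planeWave ξ (s, c)) (I * ξ.1 * planeWave ξ (t, c)) t := by
  have h : HasDerivAt (fun s : ℝ => I * ((ξ.1 * s + ξ.2 * c : ℝ) : ℂ)) (I * ξ.1) t := by
    simpa using (((hasDerivAt_id (t : ℂ)).const_mul (ξ.1 : ℂ)).add_const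
      ((ξ.2 : ℂ) * c)).comp_ofReal.const_mul I
  simpa [planeWave, mul_comm] using h.cexp

theorem hasDerivAt_planeWave_snd (ξ : ℝ × ℝ) (c t : ℝ) :
    HasDerivAt (fun s => planeWave ξ (c, s)) (I * ξ.2 * planeWave ξ (c, t)) t := by
  have h : HasDerivAt (fun s : ℝ => I * ((ξ.1 * c + ξ.2 * s : ℝ) : ℂ)) (I * ξ.2) t := by
    simpa using (((hasDerivAt_id (t : ℂ)).const_mul (ξ.2 : ℂ)).const_add
      ((ξ.1 : ℂ) * c)).comp_ofReal.const_mul I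
  simpa [planeWave, mul_comm] using h.cexp

section Laplacian

variable {ι : Type*} (s : Finset ι) (c : ι → ℂ) (ξ : ι → ℝ × ℝ)

theorem pd1_sum_planeWave :
    pd1 (fun y => ∑ i ∈ s, c i * planeWave (ξ i) y)
      = fun x => ∑ i ∈ s, c i * (I * (ξ i).1) * planeWave (ξ i) x := by
  funext x
  have h := HasDerivAt.fun_sum fun i (_ : i ∈ s) =>
    (hasDerivAt_planeWave_fst (ξ i) x.2 x.1).const_mul (c i)
  rw [pd1, h.deriv]
  exact sum_congr rfl fun i _ => by ring

theorem pd2_sum_planeWave :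
    pd2 (fun y => ∑ i ∈ s, c i * planeWave (ξ i) y)
      = fun x => ∑ i ∈ s, c i * (I * (ξ i).2) * planeWave (ξ i) x := by
  funext x
  have h := HasDerivAt.fun_sum fun i (_ : i ∈ s) =>
    (hasDerivAt_planeWave_snd (ξ i) x.1 x.2).const_mul (c i)
  rw [pd2, h.deriv]
  exact sum_congr rfl fun i _ => by ring

theorem lap_sum_planeWave (x : ℝ × ℝ) :
    lap (fun y => ∑ i ∈ s, c i * planeWave (ξ i) y) x
      = ∑ i ∈ s, -(((ξ i).1 ^ 2 + (ξ i).2 ^ 2 : ℝ) : ℂ) * (c i * planeWave (ξ i) x) := by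
  rw [lap, pd1_sum_planeWave, pd1_sum_planeWave, pd2_sum_planeWave, pd2_sum_planeWave,
    ← sum_add_distrib]
  refine sum_congr rfl fun i _ => ?_
  push_cast
  linear_combination c i * ((ξ i).1 ^ 2 + (ξ i).2 ^ 2) * planeWave (ξ i) x * I_sq

theorem lap_sum_planeWave_of_normSq_eq {r : ℝ}
    (hξ : ∀ i ∈ s, (ξ i).1 ^ 2 + (ξ i).2 ^ 2 = r) (x : ℝ × ℝ) :
    lap (fun y => ∑ i ∈ s, planeWave (ξ i) y) x = -(r : ℂ) * ∑ i ∈ s, planeWave (ξ i) x := by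
  have h := lap_sum_planeWave s 1 ξ x
  simp only [Pi.one_apply, one_mul] at h
  rw [h, mul_sum]
  exact sum_congr rfl fun i hi => by rw [hξ i hi]

end Laplacian

theorem sum_product_self_sub_sum_diag {α M : Type*} [DecidableEq α] [AddCommGroup M]
    (s : Finset α) (f : α × α → M) :
    ∑ x ∈ s ×ˢ s, f x - ∑ i ∈ s, f (i, i) = ∑ x ∈ s.offDiag, f x := by
  rw [← diag_union_offDiag, sum_union (disjoint_diag_offDiag s), sum_diag, add_sub_cancel_left]

theorem βvec_dot (k l : Fin 3) :
    (βvec k).1 * (βvec l).1 + (βvec k).2 * (βvec l).2 = if k = l then 1 else -(1 / 2) := by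
  have h3 : Real.sqrt 3 * Real.sqrt 3 = 3 := Real.mul_self_sqrt (by norm_num)
  fin_cases k <;> fin_cases l <;> simp [βvec] <;> linarith

theorem normSq_smul_βvec_add_smul_βvec {k l : Fin 3} (hkl : k ≠ l) (a b : ℝ) :
    (a • βvec k + b • βvec l).1 ^ 2 + (a • βvec k + b • βvec l).2 ^ 2 = a ^ 2 + b ^ 2 - a * b := by
  have hkk := βvec_dot k k
  have hll := βvec_dot l l
  have hkl' := βvec_dot k l
  rw [if_pos rfl] at hkk hll
  rw [if_neg hkl] at hkl'
  simp only [Prod.fst_add, Prod.snd_add, Prod.smul_fst, Prod.smul_snd, smul_eq_mul]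
  linear_combination a ^ 2 * hkk + b ^ 2 * hll + 2 * a * b * hkl'

theorem stmt_9 (T : ℤ → ℝ × ℝ → ℂ)
    (hT : ∀ (p : ℤ) (x : ℝ × ℝ), T p x = ∑ k : Fin 3,
      Complex.exp (Complex.I * (p : ℂ) * (((βvec k).1 * x.1 + (βvec k).2 * x.2 : ℝ) : ℂ))) :
    ∀ (p q : ℤ) (x : ℝ × ℝ),
      lap (fun y => T p y * T (-q) y - T (p - q) y) x
        = -(((p : ℂ)) ^ 2 + (q : ℂ) ^ 2 + (p : ℂ) * q) * (T p x * T (-q) x - T (p - q) x) := by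
  intro p q x
  have hT_planeWave (n : ℤ) (y : ℝ × ℝ) : T n y = ∑ k, planeWave ((n : ℝ) • βvec k) y := by
    refine (hT n y).trans (sum_congr rfl fun k _ => congrArg exp ?_)
    simp only [Prod.smul_fst, Prod.smul_snd, smul_eq_mul]
    push_cast
    ring
  have hexpand (y : ℝ × ℝ) : T p y * T (-q) y - T (p - q) y
      = ∑ kl ∈ univ.offDiag, planeWave ((p : ℝ) • βvec kl.1 + ((-q : ℤ) : ℝ) • βvec kl.2) y := by
    rw [hT_planeWave, hT_planeWave, hT_planeWave, sum_mul_sum, ← sum_product',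
      ← sum_product_self_sub_sum_diag]
    simp only [sub_eq_add_neg, Int.cast_add, Int.cast_neg, add_smul, planeWave_add]
  rw [funext hexpand, hexpand x, lap_sum_planeWave_of_normSq_eq _ _
    fun kl hkl => normSq_smul_βvec_add_smul_βvec (mem_offDiag.1 hkl).2.2 _ _]
  push_cast
  ring
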